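/- Let H be a weak Hopf algebra over a field k. Then for Π ∈ {Π_L, Π_R, \overline{Π}_L, \overline{Π}_R} the following mixed associativity-type identities hold (these are automatic here by associativity, so state instead the weak Hopf quasigroup content): in any weak Hopf quasigroup H over k (a unital magma and comonoid satisfying axioms (a1)–(a4)), the identities μ∘((μ∘(Π⊗id))⊗id) = μ∘(Π⊗μ), μ∘(id⊗(μ∘(Π⊗id))) = μ∘((μ∘(id⊗Π))⊗id), and μ∘(id⊗(μ∘(id⊗Π))) = μ∘(μ⊗Π) hold for Π = Π_L = μ∘(id⊗λ)∘δ. -/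

import Mathlib

open TensorProduct

noncomputable section

namespace DoiHopf

variable (k : Type) [Field k]
variable (H : Type) [AddCommGroup H] [Module k H]

variable (mul : H ⊗[k] H →ₗ[k] H) (one : H) (eps : H →ₗ[k] k)
variable (delta : H →ₗ[k] H ⊗[k] H) (lam : H →ₗ[k] H)

/-- regroup `(x ⊗ (y₁ ⊗ y₂)) ⊗ z ↦ (x ⊗ y₁) ⊗ (y₂ ⊗ z)`. -/
def regroup : (H ⊗[k] (H ⊗[k] H)) ⊗[k] H →ₗ[k] (H ⊗[k] H) ⊗[k] (H ⊗[k] H) :=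
  (TensorProduct.assoc k (H ⊗[k] H) H H).toLinearMap
    ∘ₗ ((TensorProduct.assoc k H H H).symm.toLinearMap.rTensor H)

/-- `(id ⊗ f ⊗ id) : (H⊗H)⊗(H⊗H) → (H⊗H)⊗H` applying `f` to the middle factors. -/
def middle (f : H ⊗[k] H →ₗ[k] H) :
    (H ⊗[k] H) ⊗[k] (H ⊗[k] H) →ₗ[k] (H ⊗[k] H) ⊗[k] H :=
  (TensorProduct.assoc k H H H).symm.toLinearMap
    ∘ₗ ((f.rTensor H ∘ₗ (TensorProduct.assoc k H H H).symm.toLinearMap).lTensor H)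
    ∘ₗ (TensorProduct.assoc k H H (H ⊗[k] H)).toLinearMap

/-- `Π_L = id ∗ λ = μ ∘ (id ⊗ λ) ∘ δ`. -/
def PiL : H →ₗ[k] H := mul ∘ₗ lam.lTensor H ∘ₗ delta

/-- `Π_R = λ ∗ id = μ ∘ (λ ⊗ id) ∘ δ`. -/
def PiR : H →ₗ[k] H := mul ∘ₗ lam.rTensor H ∘ₗ delta

/-- `(ε∘μ ⊗ id) ∘ (id ⊗ swap) ∘ (δ(1) ⊗ id)`, i.e. `x ↦ ε(1₍₁₎ x) 1₍₂₎`. -/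
def PiLformula : H →ₗ[k] H :=
  (TensorProduct.lid k H).toLinearMap
    ∘ₗ ((eps ∘ₗ mul).rTensor H)
    ∘ₗ (TensorProduct.assoc k H H H).symm.toLinearMap
    ∘ₗ ((TensorProduct.comm k H H).toLinearMap.lTensor H)
    ∘ₗ (TensorProduct.assoc k H H H).toLinearMap
    ∘ₗ (TensorProduct.mk k (H ⊗[k] H) H (delta one))

/-- `(id ⊗ ε∘μ) ∘ (swap ⊗ id) ∘ (id ⊗ δ(1))`, i.e. `x ↦ ε(x 1₍₂₎) 1₍₁₎`. -/
def PiRformula : H →ₗ[k] H :=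
  (TensorProduct.rid k H).toLinearMap
    ∘ₗ ((eps ∘ₗ mul).lTensor H)
    ∘ₗ (TensorProduct.assoc k H H H).toLinearMap
    ∘ₗ ((TensorProduct.comm k H H).toLinearMap.rTensor H)
    ∘ₗ (TensorProduct.assoc k H H H).symm.toLinearMap
    ∘ₗ ((TensorProduct.mk k H (H ⊗[k] H)).flip (delta one))

/-- A weak Hopf quasigroup: a unital magma and comonoid satisfying axioms
(a1)–(a4-7) of Alonso Álvarez–Fernández Vilaboa–González Rodríguez. -/
structure IsWeakHopfQuasigroup : Prop where
  one_mul : ∀ x, mul (one ⊗ₜ[k] x) = x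
  mul_one : ∀ x, mul (x ⊗ₜ[k] one) = x
  coassoc : (TensorProduct.assoc k H H H).toLinearMap ∘ₗ delta.rTensor H ∘ₗ delta
      = delta.lTensor H ∘ₗ delta
  counit_left : ∀ x, (TensorProduct.lid k H) ((eps.rTensor H) (delta x)) = x
  counit_right : ∀ x, (TensorProduct.rid k H) ((eps.lTensor H) (delta x)) = x
  delta_mul : delta ∘ₗ mul = (TensorProduct.map mul mul)
      ∘ₗ (TensorProduct.tensorTensorTensorComm k H H H H).toLinearMap
      ∘ₗ (TensorProduct.map delta delta)
  weak_counit₀ : eps ∘ₗ mul ∘ₗ mul.rTensor H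
      = eps ∘ₗ mul ∘ₗ mul.lTensor H ∘ₗ (TensorProduct.assoc k H H H).toLinearMap
  weak_counit₁ : eps ∘ₗ mul ∘ₗ mul.rTensor H
      = (TensorProduct.lid k k).toLinearMap
        ∘ₗ (TensorProduct.map (eps ∘ₗ mul) (eps ∘ₗ mul))
        ∘ₗ regroup k H ∘ₗ ((delta.lTensor H).rTensor H)
  weak_counit₂ : eps ∘ₗ mul ∘ₗ mul.rTensor H
      = (TensorProduct.lid k k).toLinearMap
        ∘ₗ (TensorProduct.map (eps ∘ₗ mul) (eps ∘ₗ mul))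
        ∘ₗ regroup k H
        ∘ₗ ((((TensorProduct.comm k H H).toLinearMap ∘ₗ delta).lTensor H).rTensor H)
  weak_unit₁ : delta.rTensor H (delta one)
      = middle k H mul (delta one ⊗ₜ[k] delta one)
  weak_unit₂ : delta.rTensor H (delta one)
      = middle k H (mul ∘ₗ (TensorProduct.comm k H H).toLinearMap)
          (delta one ⊗ₜ[k] delta one)
  piL_eq : PiL k H mul delta lam = PiLformula k H mul one eps delta
  piR_eq : PiR k H mul delta lam = PiRformula k H mul one eps delta
  lam_piL : mul ∘ₗ (TensorProduct.map lam (PiL k H mul delta lam)) ∘ₗ delta = lam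
  piR_lam : mul ∘ₗ (TensorProduct.map (PiR k H mul delta lam) lam) ∘ₗ delta = lam
  a44 : mul ∘ₗ (TensorProduct.map lam mul)
      ∘ₗ (TensorProduct.assoc k H H H).toLinearMap ∘ₗ delta.rTensor H
      = mul ∘ₗ (PiR k H mul delta lam).rTensor H
  a45 : mul ∘ₗ (TensorProduct.map (LinearMap.id : H →ₗ[k] H) (mul ∘ₗ lam.rTensor H))
      ∘ₗ (TensorProduct.assoc k H H H).toLinearMap ∘ₗ delta.rTensor H
      = mul ∘ₗ (PiL k H mul delta lam).rTensor H
  a46 : mul ∘ₗ (TensorProduct.map mul lam)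
      ∘ₗ (TensorProduct.assoc k H H H).symm.toLinearMap ∘ₗ delta.lTensor H
      = mul ∘ₗ (PiL k H mul delta lam).lTensor H
  a47 : mul ∘ₗ (TensorProduct.map (mul ∘ₗ lam.lTensor H) (LinearMap.id : H →ₗ[k] H))
      ∘ₗ (TensorProduct.assoc k H H H).symm.toLinearMap ∘ₗ delta.lTensor H
      = mul ∘ₗ (PiR k H mul delta lam).lTensor H

/-!
Multiplying by a value of `Π_L` can be traded for a Sweedler sum:
`u Π_L(v) = ε(u₁ v) u₂`, by coassociativity and `δ(u 1) = δ(u)`, and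
`Π_L(v) w = ε(Π_L(v) w₁) w₂`, by the weak unit axiom and `δ(1 w) = δ(w)`; both computations close
with `ε(x₁ y₁) x₂ y₂ = x y`, which is multiplicativity of `δ` followed by the counit.
After this trade, the two sides of each identity are Sweedler sums of terms `ε((a b) c)` and
`ε(a (b c))`, and the three forms of the weak counit axiom identify them.
-/

section

variable {R M N : Type*} [CommSemiring R] [AddCommMonoid M] [AddCommMonoid N] [Module R M]
  [Module R N]

/-- A fixed decomposition of `t` into pure tensors; sums over `terms (delta x)` are the Sweedler
sums `x₁ ⊗ x₂`. -/
def terms (t : M ⊗[R] N) : Finset (M × N) :=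
  (TensorProduct.exists_finset t).choose

lemma sum_terms (t : M ⊗[R] N) : ∑ p ∈ terms t, p.1 ⊗ₜ[R] p.2 = t :=
  (TensorProduct.exists_finset t).choose_spec.symm

end

namespace IsWeakHopfQuasigroup

variable {k H mul one eps delta lam}

local notation:70 a:70 " ⋆ " b:71 => mul (a ⊗ₜ[k] b)
local notation "Π_L" => PiL k H mul delta lam

variable (hH : IsWeakHopfQuasigroup k H mul one eps delta lam)
include hH

lemma delta_mul_eq_sum (x y : H) : delta (x ⋆ y) =
    ∑ p ∈ terms (delta x), ∑ q ∈ terms (delta y), (p.1 ⋆ q.1) ⊗ₜ[k] (p.2 ⋆ q.2) := by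
  have := LinearMap.congr_fun hH.delta_mul (x ⊗ₜ y)
  simp only [LinearMap.comp_apply, map_tmul] at this
  rw [this]
  conv_lhs => rw [← sum_terms (delta x), ← sum_terms (delta y)]
  simp only [TensorProduct.tmul_sum, TensorProduct.sum_tmul, map_sum, LinearEquiv.coe_coe,
    tensorTensorTensorComm_tmul, map_tmul]
  exact Finset.sum_comm

lemma sum_terms_delta_mul (φ : H →ₗ[k] k) (x y : H) :
    ∑ r ∈ terms (delta (x ⋆ y)), φ r.1 • r.2
      = ∑ p ∈ terms (delta x), ∑ q ∈ terms (delta y), φ (p.1 ⋆ q.1) • (p.2 ⋆ q.2) := by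
  have := congr_arg ((TensorProduct.lid k H).toLinearMap ∘ₗ φ.rTensor H) (hH.delta_mul_eq_sum x y)
  conv_lhs at this => rw [← sum_terms (delta (x ⋆ y))]
  simpa [map_sum] using this

lemma lid_map_counit_mul_mul_delta (x y : H) :
    TensorProduct.lid k H (TensorProduct.map (eps ∘ₗ mul) mul
      (TensorProduct.tensorTensorTensorComm k H H H H (delta x ⊗ₜ delta y))) = x ⋆ y := by
  have := LinearMap.congr_fun hH.delta_mul (x ⊗ₜ y)
  simp only [LinearMap.comp_apply, map_tmul, LinearEquiv.coe_coe] at this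
  rw [← hH.counit_left (x ⋆ y), this, ← LinearMap.rTensor_comp_map]
  rfl

lemma counit_mul_mul_assoc (x y z : H) : eps ((x ⋆ y) ⋆ z) = eps (x ⋆ (y ⋆ z)) := by
  simpa using LinearMap.congr_fun hH.weak_counit₀ ((x ⊗ₜ y) ⊗ₜ z)

lemma counit_mul_mul_eq_sum_left (x y z : H) :
    eps ((x ⋆ y) ⋆ z) = ∑ q ∈ terms (delta y), eps (x ⋆ q.1) * eps (q.2 ⋆ z) := by
  have := LinearMap.congr_fun hH.weak_counit₁ ((x ⊗ₜ y) ⊗ₜ z)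
  simp only [LinearMap.comp_apply, LinearMap.rTensor_tmul, LinearMap.lTensor_tmul] at this
  conv_rhs at this => rw [← sum_terms (delta y)]
  simpa [regroup, map_sum, TensorProduct.tmul_sum, TensorProduct.sum_tmul] using this

lemma counit_mul_mul_eq_sum_right (x y z : H) :
    eps ((x ⋆ y) ⋆ z) = ∑ q ∈ terms (delta y), eps (x ⋆ q.2) * eps (q.1 ⋆ z) := by
  have := LinearMap.congr_fun hH.weak_counit₂ ((x ⊗ₜ y) ⊗ₜ z)
  simp only [LinearMap.comp_apply, LinearMap.rTensor_tmul, LinearMap.lTensor_tmul] at this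
  conv_rhs at this => rw [← sum_terms (delta y)]
  simpa [regroup, map_sum, TensorProduct.tmul_sum, TensorProduct.sum_tmul] using this

lemma piL_eq_sum (x : H) : Π_L x = ∑ q ∈ terms (delta one), eps (q.1 ⋆ x) • q.2 := by
  rw [hH.piL_eq, PiLformula]
  simp only [LinearMap.comp_apply, TensorProduct.mk_apply]
  conv_lhs => rw [← sum_terms (delta one)]
  simp [map_sum, TensorProduct.sum_tmul]

lemma sum_smul_tmul_coassoc (φ : H →ₗ[k] k) (y : H) :
    ∑ r ∈ terms (delta y), ∑ q ∈ terms (delta r.1), φ q.1 • (q.2 ⊗ₜ[k] r.2)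
      = ∑ r ∈ terms (delta y), φ r.1 • delta r.2 := by
  have := congr_arg ((TensorProduct.lid k (H ⊗[k] H)).toLinearMap ∘ₗ φ.rTensor _)
    (LinearMap.congr_fun hH.coassoc y)
  simp only [LinearMap.comp_apply] at this
  conv_lhs at this => rw [← sum_terms (delta y)]
  conv_rhs at this => rw [← sum_terms (delta y)]
  simp only [map_sum, LinearMap.rTensor_tmul, LinearMap.lTensor_tmul] at this
  conv_lhs at this => arg 2; ext r; rw [← sum_terms (delta r.1)]
  simpa [map_sum, TensorProduct.sum_tmul] using this

lemma sum_smul_tmul_weak_unit (φ : H →ₗ[k] k) :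
    ∑ q ∈ terms (delta one), ∑ q' ∈ terms (delta one), φ q.1 • ((q.2 ⋆ q'.1) ⊗ₜ[k] q'.2)
      = ∑ q ∈ terms (delta one), φ q.1 • delta q.2 := by
  have := congr_arg ((TensorProduct.lid k (H ⊗[k] H)).toLinearMap ∘ₗ φ.rTensor _)
    (LinearMap.congr_fun hH.coassoc one)
  simp only [LinearMap.comp_apply] at this
  rw [hH.weak_unit₁] at this
  conv_lhs at this => rw [← sum_terms (delta one)]
  conv_rhs at this => rw [← sum_terms (delta one)]
  simp only [middle, TensorProduct.tmul_sum, TensorProduct.sum_tmul, map_sum, LinearMap.coe_comp,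
    LinearEquiv.coe_coe, Function.comp_apply, assoc_tmul, LinearMap.lTensor_tmul, assoc_symm_tmul,
    LinearMap.rTensor_tmul, lid_tmul] at this
  rw [← this, Finset.sum_comm]

lemma exists_linearMap_counit_mul_left (x : H) : ∃ G : H ⊗[k] H →ₗ[k] H,
    (∀ b c, G (b ⊗ₜ c) = ∑ p ∈ terms (delta x), eps (p.1 ⋆ b) • (p.2 ⋆ c)) ∧
    ∀ w, G (delta w) = x ⋆ w := by
  refine ⟨(TensorProduct.lid k H).toLinearMap ∘ₗ TensorProduct.map (eps ∘ₗ mul) mul ∘ₗ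
    (TensorProduct.tensorTensorTensorComm k H H H H).toLinearMap ∘ₗ
    TensorProduct.mk k _ _ (delta x), fun b c => ?_, hH.lid_map_counit_mul_mul_delta x⟩
  simp only [LinearMap.comp_apply, TensorProduct.mk_apply]
  conv_lhs => rw [← sum_terms (delta x)]
  simp [map_sum, TensorProduct.sum_tmul]

lemma exists_linearMap_counit_mul_right (z : H) : ∃ G : H ⊗[k] H →ₗ[k] H,
    (∀ a b, G (a ⊗ₜ b) = ∑ p ∈ terms (delta z), eps (a ⋆ p.1) • (b ⋆ p.2)) ∧
    ∀ w, G (delta w) = w ⋆ z := by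
  refine ⟨(TensorProduct.lid k H).toLinearMap ∘ₗ TensorProduct.map (eps ∘ₗ mul) mul ∘ₗ
    (TensorProduct.tensorTensorTensorComm k H H H H).toLinearMap ∘ₗ
    (TensorProduct.mk k _ _).flip (delta z), fun a b => ?_,
    fun w => hH.lid_map_counit_mul_mul_delta w z⟩
  simp only [LinearMap.comp_apply, LinearMap.flip_apply, TensorProduct.mk_apply]
  conv_lhs => rw [← sum_terms (delta z)]
  simp [map_sum, TensorProduct.tmul_sum]

lemma sum_coassoc_counit_mul_left (φ : H →ₗ[k] k) (x y : H) :
    ∑ r ∈ terms (delta y), ∑ q ∈ terms (delta r.1),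
        φ q.1 • ∑ p ∈ terms (delta x), eps (p.1 ⋆ q.2) • (p.2 ⋆ r.2)
      = ∑ r ∈ terms (delta y), φ r.1 • (x ⋆ r.2) := by
  obtain ⟨G, hG, hGδ⟩ := hH.exists_linearMap_counit_mul_left x
  simpa [map_sum, hG, hGδ] using congr_arg G (hH.sum_smul_tmul_coassoc φ y)

lemma sum_coassoc_counit_mul_right (φ : H →ₗ[k] k) (y z : H) :
    ∑ r ∈ terms (delta y), ∑ q ∈ terms (delta r.1),
        φ q.1 • ∑ p ∈ terms (delta z), eps (q.2 ⋆ p.1) • (r.2 ⋆ p.2)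
      = ∑ r ∈ terms (delta y), φ r.1 • (r.2 ⋆ z) := by
  obtain ⟨G, hG, hGδ⟩ := hH.exists_linearMap_counit_mul_right z
  simpa [map_sum, hG, hGδ] using congr_arg G (hH.sum_smul_tmul_coassoc φ y)

lemma sum_weak_unit_counit_mul_right (φ : H →ₗ[k] k) (z : H) :
    ∑ q ∈ terms (delta one), ∑ q' ∈ terms (delta one),
        φ q.1 • ∑ p ∈ terms (delta z), eps ((q.2 ⋆ q'.1) ⋆ p.1) • (q'.2 ⋆ p.2)
      = ∑ q ∈ terms (delta one), φ q.1 • (q.2 ⋆ z) := by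
  obtain ⟨G, hG, hGδ⟩ := hH.exists_linearMap_counit_mul_right z
  simpa [map_sum, hG, hGδ] using congr_arg G (hH.sum_smul_tmul_weak_unit φ)

lemma mul_piL (u v : H) : u ⋆ Π_L v = ∑ p ∈ terms (delta u), eps (p.1 ⋆ v) • p.2 := by
  calc u ⋆ Π_L v
      = ∑ q ∈ terms (delta one), eps (q.1 ⋆ v) • (u ⋆ q.2) := by
        simp [hH.piL_eq_sum, TensorProduct.tmul_sum]
    _ = ∑ q ∈ terms (delta one), ∑ r ∈ terms (delta q.1), eps (r.1 ⋆ v) •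
          ∑ p ∈ terms (delta u), eps (p.1 ⋆ r.2) • (p.2 ⋆ q.2) :=
        (hH.sum_coassoc_counit_mul_left (eps ∘ₗ mul ∘ₗ (TensorProduct.mk k H H).flip v) u one).symm
    _ = ∑ p ∈ terms (delta u), ∑ q ∈ terms (delta one), eps ((p.1 ⋆ q.1) ⋆ v) • (p.2 ⋆ q.2) := by
        simp only [hH.counit_mul_mul_eq_sum_right, Finset.smul_sum, Finset.sum_smul, smul_smul]
        rw [Finset.sum_comm]
        refine Finset.sum_congr rfl fun q _ => ?_
        rw [Finset.sum_comm]
        simp [mul_comm]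
    _ = ∑ p ∈ terms (delta u), eps (p.1 ⋆ v) • p.2 := by
        simpa [hH.mul_one] using
          (hH.sum_terms_delta_mul (eps ∘ₗ mul ∘ₗ (TensorProduct.mk k H H).flip v) u one).symm

lemma piL_mul (v w : H) : Π_L v ⋆ w = ∑ p ∈ terms (delta w), eps (Π_L v ⋆ p.1) • p.2 := by
  calc Π_L v ⋆ w
      = ∑ q ∈ terms (delta one), eps (q.1 ⋆ v) • (q.2 ⋆ w) := by
        simp [hH.piL_eq_sum, TensorProduct.sum_tmul, ← TensorProduct.smul_tmul']
    _ = ∑ q ∈ terms (delta one), ∑ q' ∈ terms (delta one), eps (q.1 ⋆ v) •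
          ∑ p ∈ terms (delta w), eps ((q.2 ⋆ q'.1) ⋆ p.1) • (q'.2 ⋆ p.2) :=
        (hH.sum_weak_unit_counit_mul_right (eps ∘ₗ mul ∘ₗ (TensorProduct.mk k H H).flip v) w).symm
    _ = ∑ q' ∈ terms (delta one), ∑ p ∈ terms (delta w),
          eps ((Π_L v ⋆ q'.1) ⋆ p.1) • (q'.2 ⋆ p.2) := by
        simp only [hH.piL_eq_sum, TensorProduct.sum_tmul, ← TensorProduct.smul_tmul', map_sum,
          map_smul, smul_eq_mul, Finset.smul_sum, Finset.sum_smul, smul_smul]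
        rw [Finset.sum_comm]
        refine Finset.sum_congr rfl fun q _ => ?_
        rw [Finset.sum_comm]
    _ = ∑ p ∈ terms (delta w), eps (Π_L v ⋆ p.1) • p.2 := by
        simp only [hH.counit_mul_mul_assoc]
        simpa [hH.one_mul] using
          (hH.sum_terms_delta_mul (eps ∘ₗ mul ∘ₗ TensorProduct.mk k H H (Π_L v)) one w).symm

lemma piL_mul_mul (x y z : H) : (Π_L x ⋆ y) ⋆ z = Π_L x ⋆ (y ⋆ z) := by
  calc (Π_L x ⋆ y) ⋆ z
      = ∑ r ∈ terms (delta y), eps (Π_L x ⋆ r.1) • (r.2 ⋆ z) := by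
        simp [hH.piL_mul x y, TensorProduct.sum_tmul, ← TensorProduct.smul_tmul']
    _ = ∑ r ∈ terms (delta y), ∑ q ∈ terms (delta r.1), eps (Π_L x ⋆ q.1) •
          ∑ p ∈ terms (delta z), eps (q.2 ⋆ p.1) • (r.2 ⋆ p.2) :=
        (hH.sum_coassoc_counit_mul_right (eps ∘ₗ mul ∘ₗ TensorProduct.mk k H H (Π_L x)) y z).symm
    _ = ∑ r ∈ terms (delta y), ∑ p ∈ terms (delta z), eps ((Π_L x ⋆ r.1) ⋆ p.1) • (r.2 ⋆ p.2) := by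
        simp only [hH.counit_mul_mul_eq_sum_left, Finset.smul_sum, Finset.sum_smul, smul_smul]
        refine Finset.sum_congr rfl fun r _ => ?_
        rw [Finset.sum_comm]
    _ = ∑ r ∈ terms (delta (y ⋆ z)), eps (Π_L x ⋆ r.1) • r.2 := by
        simp only [hH.counit_mul_mul_assoc]
        exact (hH.sum_terms_delta_mul (eps ∘ₗ mul ∘ₗ TensorProduct.mk k H H (Π_L x)) y z).symm
    _ = Π_L x ⋆ (y ⋆ z) := (hH.piL_mul x (y ⋆ z)).symm

lemma mul_mul_piL (x y z : H) : x ⋆ (y ⋆ Π_L z) = (x ⋆ y) ⋆ Π_L z := by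
  calc x ⋆ (y ⋆ Π_L z)
      = ∑ r ∈ terms (delta y), eps (r.1 ⋆ z) • (x ⋆ r.2) := by
        simp [hH.mul_piL y z, TensorProduct.tmul_sum]
    _ = ∑ r ∈ terms (delta y), ∑ q ∈ terms (delta r.1), eps (q.1 ⋆ z) •
          ∑ p ∈ terms (delta x), eps (p.1 ⋆ q.2) • (p.2 ⋆ r.2) :=
        (hH.sum_coassoc_counit_mul_left (eps ∘ₗ mul ∘ₗ (TensorProduct.mk k H H).flip z) x y).symm
    _ = ∑ p ∈ terms (delta x), ∑ r ∈ terms (delta y), eps ((p.1 ⋆ r.1) ⋆ z) • (p.2 ⋆ r.2) := by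
        simp only [hH.counit_mul_mul_eq_sum_right, Finset.smul_sum, Finset.sum_smul, smul_smul]
        rw [Finset.sum_comm]
        refine Finset.sum_congr rfl fun r _ => ?_
        rw [Finset.sum_comm]
        simp only [mul_comm]
    _ = ∑ r ∈ terms (delta (x ⋆ y)), eps (r.1 ⋆ z) • r.2 :=
        (hH.sum_terms_delta_mul (eps ∘ₗ mul ∘ₗ (TensorProduct.mk k H H).flip z) x y).symm
    _ = (x ⋆ y) ⋆ Π_L z := (hH.mul_piL (x ⋆ y) z).symm

lemma mul_piL_mul (x y z : H) : x ⋆ (Π_L y ⋆ z) = (x ⋆ Π_L y) ⋆ z := by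
  have hright (a b : H) : eps (a ⋆ (Π_L y ⋆ b))
      = ∑ s ∈ terms (delta b), eps (Π_L y ⋆ s.1) * eps (a ⋆ s.2) := by
    simp [hH.piL_mul y b, TensorProduct.tmul_sum]
  have hleft (a b : H) : eps ((a ⋆ Π_L y) ⋆ b)
      = ∑ q ∈ terms (delta a), eps (q.1 ⋆ y) * eps (q.2 ⋆ b) := by
    simp [hH.mul_piL a y, TensorProduct.sum_tmul, ← TensorProduct.smul_tmul']
  calc x ⋆ (Π_L y ⋆ z)
      = ∑ p ∈ terms (delta z), eps (Π_L y ⋆ p.1) • (x ⋆ p.2) := by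
        simp [hH.piL_mul y z, TensorProduct.tmul_sum]
    _ = ∑ p ∈ terms (delta z), ∑ s ∈ terms (delta p.1), eps (Π_L y ⋆ s.1) •
          ∑ r ∈ terms (delta x), eps (r.1 ⋆ s.2) • (r.2 ⋆ p.2) :=
        (hH.sum_coassoc_counit_mul_left (eps ∘ₗ mul ∘ₗ TensorProduct.mk k H H (Π_L y)) x z).symm
    _ = ∑ r ∈ terms (delta x), ∑ p ∈ terms (delta z), eps (r.1 ⋆ (Π_L y ⋆ p.1)) • (r.2 ⋆ p.2) := by
        simp only [hright, Finset.smul_sum, Finset.sum_smul, smul_smul]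
        rw [Finset.sum_comm]
        refine Finset.sum_congr rfl fun p _ => ?_
        rw [Finset.sum_comm]
    _ = ∑ r ∈ terms (delta x), ∑ q ∈ terms (delta r.1), eps (q.1 ⋆ y) •
          ∑ p ∈ terms (delta z), eps (q.2 ⋆ p.1) • (r.2 ⋆ p.2) := by
        simp only [← hH.counit_mul_mul_assoc, hleft, Finset.smul_sum, Finset.sum_smul, smul_smul]
        refine Finset.sum_congr rfl fun r _ => ?_
        rw [Finset.sum_comm]
    _ = ∑ r ∈ terms (delta x), eps (r.1 ⋆ y) • (r.2 ⋆ z) :=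
        hH.sum_coassoc_counit_mul_right (eps ∘ₗ mul ∘ₗ (TensorProduct.mk k H H).flip y) x z
    _ = (x ⋆ Π_L y) ⋆ z := by
        simp [hH.mul_piL x y, TensorProduct.sum_tmul, ← TensorProduct.smul_tmul']

end IsWeakHopfQuasigroup

/-- In any weak Hopf quasigroup, the target morphism `Π = Π_L` satisfies the three
mixed associativity-type identities
`μ∘((μ∘(Π⊗id))⊗id) = μ∘(Π⊗μ)`, `μ∘(id⊗(μ∘(Π⊗id))) = μ∘((μ∘(id⊗Π))⊗id)` and
`μ∘(id⊗(μ∘(id⊗Π))) = μ∘(μ⊗Π)`. -/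
theorem piL_mixed_associativity
    (hH : IsWeakHopfQuasigroup k H mul one eps delta lam) :
    (mul ∘ₗ ((mul ∘ₗ (PiL k H mul delta lam).rTensor H).rTensor H)
        = mul ∘ₗ (TensorProduct.map (PiL k H mul delta lam) mul)
            ∘ₗ (TensorProduct.assoc k H H H).toLinearMap) ∧
    (mul ∘ₗ (TensorProduct.map (LinearMap.id : H →ₗ[k] H)
          (mul ∘ₗ (PiL k H mul delta lam).rTensor H))
        ∘ₗ (TensorProduct.assoc k H H H).toLinearMap
      = mul ∘ₗ ((mul ∘ₗ (PiL k H mul delta lam).lTensor H).rTensor H)) ∧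
    (mul ∘ₗ (TensorProduct.map (LinearMap.id : H →ₗ[k] H)
          (mul ∘ₗ (PiL k H mul delta lam).lTensor H))
        ∘ₗ (TensorProduct.assoc k H H H).toLinearMap
      = mul ∘ₗ (TensorProduct.map mul (PiL k H mul delta lam))) := by
  refine ⟨?_, ?_, ?_⟩ <;> refine TensorProduct.ext_threefold fun x y z => ?_
  · simpa using hH.piL_mul_mul x y z
  · simpa using hH.mul_piL_mul x y z
  · simpa using hH.mul_mul_piL x y z
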